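/- Let L_4 = U^{⊕3} ⊕ E8(-1)^{⊕2} ⊕ ⟨-6⟩. If v ∈ L_4 is a primitive vector with div(v) = 3, then v² ≡ 3 (mod 9). -/
import Mathlib


open Matrix

/-- Gram matrix of the hyperbolic plane `U`. -/
def U2 : Matrix (Fin 2) (Fin 2) ℤ := !![0, 1; 1, 0]

/-- Gram matrix of the negative definite `E8(-1)` lattice. -/
def E8neg : Matrix (Fin 8) (Fin 8) ℤ :=
  !![-2, 1, 0, 0, 0, 0, 0, 0;
      1,-2, 1, 0, 0, 0, 0, 0;
      0, 1,-2, 1, 0, 0, 0, 0;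
      0, 0, 1,-2, 1, 0, 0, 0;
      0, 0, 0, 1,-2, 1, 0, 1;
      0, 0, 0, 0, 1,-2, 1, 0;
      0, 0, 0, 0, 0, 1,-2, 0;
      0, 0, 0, 0, 1, 0, 0,-2]

/-- Index type of the unimodular summand `U^3 ⊕ E8(-1)^2`. -/
abbrev KIdx := (Fin 2 ⊕ (Fin 2 ⊕ Fin 2)) ⊕ (Fin 8 ⊕ Fin 8)

/-- Gram matrix of `U^3 ⊕ E8(-1)^2`. -/
def GramK : Matrix KIdx KIdx ℤ :=
  Matrix.fromBlocks
    (Matrix.fromBlocks U2 0 0 (Matrix.fromBlocks U2 0 0 U2)) 0 0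
    (Matrix.fromBlocks E8neg 0 0 E8neg)

/-- Index type of `L_n = U^3 ⊕ E8(-1)^2 ⊕ ⟨-(2n-2)⟩`. -/
abbrev LIdx := KIdx ⊕ Fin 1

/-- Gram matrix of `L_n = U^3 ⊕ E8(-1)^2 ⊕ ⟨-(2n-2)⟩`. -/
def GramL (n : ℕ) : Matrix LIdx LIdx ℤ :=
  Matrix.fromBlocks GramK 0 0 !![-(2 * (n : ℤ) - 2)]

/-- The bilinear form of `L_n`. -/
def bil (n : ℕ) (v w : LIdx → ℤ) : ℤ := v ⬝ᵥ ((GramL n).mulVec w)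

/-- The `ℚ`-bilinear extension of the form of `L_n` to `L_n ⊗ ℚ`. -/
def bilQ (n : ℕ) (v w : LIdx → ℚ) : ℚ :=
  v ⬝ᵥ (((GramL n).map (Int.cast : ℤ → ℚ)).mulVec w)

/-- The inclusion `L_n ↪ L_n ⊗ ℚ`. -/
def toQ (v : LIdx → ℤ) : LIdx → ℚ := fun i => (v i : ℚ)

/-- The generator `δ` of the summand `⟨-(2n-2)⟩`. -/
def deltaVec : LIdx → ℤ := fun i => if i = Sum.inr 0 then 1 else 0

/-- A lattice vector is primitive if it is not a nontrivial multiple of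
another lattice vector. -/
def IsPrimitive (v : LIdx → ℤ) : Prop :=
  ∀ (k : ℤ) (w : LIdx → ℤ), v = k • w → IsUnit k

/-- `HasDiv n v m` says that `div(v) = m`, i.e. `(v, L_n) = mℤ`. -/
def HasDiv (n : ℕ) (v : LIdx → ℤ) (m : ℤ) : Prop :=
  Ideal.span (Set.range fun w => bil n v w) = Ideal.span {m}

/-- Explicit integral inverse of `E8neg`. -/
def E8inv : Matrix (Fin 8) (Fin 8) ℤ :=
  !![-2, -3, -4, -5, -6, -4, -2, -3;
     -3, -6, -8, -10, -12, -8, -4, -6;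
     -4, -8, -12, -15, -18, -12, -6, -9;
     -5, -10, -15, -20, -24, -16, -8, -12;
     -6, -12, -18, -24, -30, -20, -10, -15;
     -4, -8, -12, -16, -20, -14, -7, -10;
     -2, -4, -6, -8, -10, -7, -4, -5;
     -3, -6, -9, -12, -15, -10, -5, -8]

/-- Explicit integral inverse of `GramK`. -/
def BinvK : Matrix KIdx KIdx ℤ :=
  Matrix.fromBlocks
    (Matrix.fromBlocks U2 0 0 (Matrix.fromBlocks U2 0 0 U2)) 0 0
    (Matrix.fromBlocks E8inv 0 0 E8inv)

lemma U2_mul_U2 : U2 * U2 = 1 := by decide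

lemma E8_mul_inv : E8neg * E8inv = 1 := by decide

lemma GramK_mul_Binv : GramK * BinvK = 1 := by
  unfold GramK BinvK
  rw [Matrix.fromBlocks_multiply, Matrix.fromBlocks_multiply,
    Matrix.fromBlocks_multiply, Matrix.fromBlocks_multiply]
  simp [U2_mul_U2, E8_mul_inv, Matrix.fromBlocks_one]

lemma bil_colvec (v : LIdx → ℤ) (i : KIdx) :
    bil 4 v (Sum.elim (fun j => BinvK j i) 0) = v (Sum.inl i) := by
  have hv : v = Sum.elim (fun j => v (Sum.inl j)) (fun j => v (Sum.inr j)) := by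
    funext j; cases j <;> rfl
  have hcol : GramK.mulVec (fun j => BinvK j i) =
      fun j => (1 : Matrix KIdx KIdx ℤ) j i := by
    funext j
    have h := congrFun (congrFun GramK_mul_Binv j) i
    simpa [Matrix.mul_apply, Matrix.mulVec, dotProduct] using h
  unfold bil GramL
  rw [Matrix.fromBlocks_mulVec]
  conv_lhs => rw [hv]
  rw [sumElim_dotProduct_sumElim]
  simp [hcol, Matrix.one_apply, dotProduct, Matrix.mulVec]

/-- in `L_4`, a primitive vector of divisor 3 has `v² ≡ 3 (mod 9)`. -/
theorem stmt_5 (v : LIdx → ℤ) (hprim : IsPrimitive v) (hdiv : HasDiv 4 v 3) :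
    bil 4 v v ≡ 3 [ZMOD 9] := by
  -- every value of the form is divisible by 3
  have hdvd : ∀ w, (3 : ℤ) ∣ bil 4 v w := by
    intro w
    have hmem : bil 4 v w ∈ Ideal.span (Set.range fun w => bil 4 v w) :=
      Ideal.subset_span ⟨w, rfl⟩
    rw [hdiv, Ideal.mem_span_singleton] at hmem
    exact hmem
  -- the unimodular-part coordinates of v are divisible by 3
  have hK : ∀ i : KIdx, (3 : ℤ) ∣ v (Sum.inl i) := by
    intro i
    have := hdvd (Sum.elim (fun j => BinvK j i) 0)
    rwa [bil_colvec] at this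
  -- the last coordinate is not divisible by 3, by primitivity
  set a : ℤ := v (Sum.inr 0) with ha_def
  have ha : ¬ (3 : ℤ) ∣ a := by
    intro h3
    have hall : ∀ j, (3 : ℤ) ∣ v j := by
      intro j
      cases j with
      | inl i => exact hK i
      | inr i =>
        have : i = 0 := Subsingleton.elim _ _
        rw [this]; exact h3
    have hveq : v = (3 : ℤ) • fun j => v j / 3 := by
      funext j
      simpa using (Int.mul_ediv_cancel' (hall j)).symm
    have := hprim 3 _ hveq
    rw [Int.isUnit_iff] at this
    omega
  -- split v
  set u : KIdx → ℤ := fun i => v (Sum.inl i) / 3 with hu_def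
  have hu : ∀ i, v (Sum.inl i) = 3 * u i := fun i =>
    (Int.mul_ediv_cancel' (hK i)).symm
  have hvsplit : v = Sum.elim (fun i => 3 * u i) (fun _ => a) := by
    funext j
    cases j with
    | inl i => exact hu i
    | inr i =>
      have : i = 0 := Subsingleton.elim _ _
      rw [this]; rfl
  -- compute the form
  have hbil : bil 4 v v = 9 * (u ⬝ᵥ GramK.mulVec u) - 6 * (a * a) := by
    conv_lhs => rw [hvsplit]
    unfold bil GramL
    rw [Matrix.fromBlocks_mulVec, sumElim_dotProduct_sumElim]
    simp only [Sum.elim_comp_inl, Sum.elim_comp_inr, Matrix.zero_mulVec,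
      Matrix.mulVec_zero, add_zero, zero_add]
    have hsm : (fun i => 3 * u i) = (3 : ℤ) • u := rfl
    rw [hsm, Matrix.mulVec_smul, smul_dotProduct, dotProduct_smul,
      smul_eq_mul, smul_eq_mul]
    simp [Matrix.mulVec, dotProduct, Fin.sum_univ_one]
    ring
  -- a * a ≡ 1 mod 3
  obtain ⟨k, hk⟩ : ∃ k, a * a - 1 = 3 * k := by
    have hmod : a % 3 = 1 ∨ a % 3 = 2 := by
      have : a % 3 ≠ 0 := fun h => ha (Int.dvd_of_emod_eq_zero h)
      omega
    obtain ⟨q, hq⟩ : ∃ q, a = 3 * q + a % 3 := ⟨a / 3, by omega⟩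
    rcases hmod with h | h
    · exact ⟨3 * q * q + 2 * q, by rw [hq, h]; ring⟩
    · exact ⟨3 * q * q + 4 * q + 1, by rw [hq, h]; ring⟩
  rw [Int.modEq_iff_dvd]
  exact ⟨1 + 2 * k - (u ⬝ᵥ GramK.mulVec u), by rw [hbil]; linear_combination 6 * hk⟩
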